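/- Let 0 < γ < mn, take γ_i = γ/m for every i, let p⃗ be a vector of exponents, set τ = (γ-mn)(1-1/m)+1/m, and let δ = γ - n/p. Let v_1,…,v_m be weights and w = Π_{i=1}^m v_i. Then (w,v⃗) ∈ ℍ_m(p⃗,γ,δ) implies v⃗ ∈ A_{p⃗,∞}; and if moreover δ < τ, then (w,v⃗) ∈ ℍ_m(p⃗,γ,δ) if and only if v⃗ ∈ A_{p⃗,∞}. -/

import Mathlib

open MeasureTheory Metric Set
open scoped ENNReal NNReal BigOperators Classical

noncomputable section

/-- Euclidean `n`-space. -/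
abbrev Rn (n : ℕ) := EuclideanSpace ℝ (Fin n)

/-- The conjugate exponent in `ℝ≥0∞`. -/
def conjE (q : ℝ≥0∞) : ℝ≥0∞ :=
  if q = 1 then ∞ else if q = ∞ then 1
  else ENNReal.ofReal (q.toReal / (q.toReal - 1))

/-- An `L^q`-type quantity on the set `s` for an `ℝ≥0∞`-valued function `g`:
the usual integral expression for `q < ∞`, and the essential supremum for `q = ∞`. -/
def lpOn {n : ℕ} (q : ℝ≥0∞) (g : Rn n → ℝ≥0∞) (s : Set (Rn n)) : ℝ≥0∞ :=
  if q = ∞ then essSup g (volume.restrict s)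
  else (∫⁻ y in s, g y ^ q.toReal) ^ (1 / q.toReal)

/-- A weight: measurable, positive and finite a.e., and locally integrable. -/
def IsWeight {n : ℕ} (u : Rn n → ℝ≥0∞) : Prop :=
  Measurable u ∧ (∀ᵐ x ∂(volume : Measure (Rn n)), 0 < u x ∧ u x < ∞) ∧
    ∀ (x : Rn n) (R : ℝ), 0 < R → ∫⁻ y in ball x R, u y < ∞

/-- The `i`-th factor in the `ℍ_m(p⃗,γ,δ)` condition, where `q = p_i'` is the
conjugate exponent of `p_i` (an essential supremum when `p_i = 1`). -/
def HmFactor {n : ℕ} (m : ℕ) (γi : ℝ) (q : ℝ≥0∞) (vi : Rn n → ℝ≥0∞)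
    (xB : Rn n) (R : ℝ) : ℝ≥0∞ :=
  lpOn q
    (fun y => (vi y)⁻¹ *
      (volume (ball xB R) ^ ((n : ℝ)⁻¹) + edist xB y) ^
        (-((n : ℝ) - γi + 1 / (m : ℝ))))
    Set.univ

/-- The class `ℍ_m(p⃗,γ,δ)` for a pair `(w, v⃗)`. -/
def Hm {n : ℕ} (m : ℕ) (γv : Fin m → ℝ) (δ : ℝ) (p : Fin m → ℝ≥0∞)
    (w : Rn n → ℝ≥0∞) (v : Fin m → Rn n → ℝ≥0∞) : Prop :=
  ∃ C : ℝ, 0 < C ∧ ∀ (xB : Rn n) (R : ℝ), 0 < R →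
    essSup w (volume.restrict (ball xB R)) *
        volume (ball xB R) ^ (-((δ - 1) / (n : ℝ))) *
        ∏ i, HmFactor m (γv i) (conjE (p i)) (v i) xB R
      ≤ ENNReal.ofReal C

/-- The global condition associated to `ℍ_m(p⃗,γ,δ)`. -/
def GlobalCond {n : ℕ} (m : ℕ) (γv : Fin m → ℝ) (δ : ℝ) (p : Fin m → ℝ≥0∞)
    (w : Rn n → ℝ≥0∞) (v : Fin m → Rn n → ℝ≥0∞) : Prop :=
  ∃ C : ℝ, 0 < C ∧ ∀ (xB : Rn n) (R : ℝ), 0 < R →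
    essSup w (volume.restrict (ball xB R)) *
        volume (ball xB R) ^ (-((δ - 1) / (n : ℝ))) *
        ∏ i, lpOn (conjE (p i))
          (fun y => (v i y)⁻¹ * edist xB y ^ (-((n : ℝ) - γv i + 1 / (m : ℝ))))
          (ball xB R)ᶜ
      ≤ ENNReal.ofReal C

/-- The local condition associated to `ℍ_m(p⃗,γ,δ)`. -/
def LocalCond {n : ℕ} (m : ℕ) (γ δ : ℝ) (p : Fin m → ℝ≥0∞)
    (w : Rn n → ℝ≥0∞) (v : Fin m → Rn n → ℝ≥0∞) : Prop :=
  ∃ C : ℝ, 0 < C ∧ ∀ (xB : Rn n) (R : ℝ), 0 < R →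
    essSup w (volume.restrict (ball xB R)) *
        volume (ball xB R) ^
          (-(δ / (n : ℝ)) + γ / (n : ℝ) - ∑ i, ((p i)⁻¹).toReal) *
        ∏ i, (volume (ball xB R) ^ (-(((conjE (p i))⁻¹).toReal)) *
          lpOn (conjE (p i)) (fun y => (v i y)⁻¹) (ball xB R))
      ≤ ENNReal.ofReal C

/-- The reverse Hölder class `RH_s`. -/
def memRH {n : ℕ} (s : ℝ) (u : Rn n → ℝ≥0∞) : Prop :=
  ∃ C : ℝ, 0 < C ∧ ∀ (x : Rn n) (R : ℝ), 0 < R →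
    ((volume (ball x R))⁻¹ * ∫⁻ y in ball x R, u y ^ s) ^ (1 / s) ≤
      ENNReal.ofReal C * ((volume (ball x R))⁻¹ * ∫⁻ y in ball x R, u y)

/-- The reverse Hölder class `RH_∞`. -/
def memRHinf {n : ℕ} (u : Rn n → ℝ≥0∞) : Prop :=
  ∃ C : ℝ, 0 < C ∧ ∀ (x : Rn n) (R : ℝ), 0 < R →
    essSup u (volume.restrict (ball x R)) ≤
      ENNReal.ofReal C * ((volume (ball x R))⁻¹ * ∫⁻ y in ball x R, u y)

/-- Doubling condition for an `ℝ≥0∞`-valued weight. -/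
def IsDoubling {n : ℕ} (u : Rn n → ℝ≥0∞) : Prop :=
  ∃ C : ℝ, 0 < C ∧ ∀ (x : Rn n) (R : ℝ), 0 < R →
    ∫⁻ y in ball x (2 * R), u y ≤ ENNReal.ofReal C * ∫⁻ y in ball x R, u y

/-- The multilinear class `A_{p⃗,∞}`. -/
def ApInfty {n : ℕ} (m : ℕ) (p : Fin m → ℝ≥0∞) (v : Fin m → Rn n → ℝ≥0∞) : Prop :=
  ∃ C : ℝ, 0 < C ∧ ∀ (xB : Rn n) (R : ℝ), 0 < R →
    essSup (fun x => ∏ i, v i x) (volume.restrict (ball xB R)) *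
        ∏ i, (volume (ball xB R) ^ (-(((conjE (p i))⁻¹).toReal)) *
          lpOn (conjE (p i)) (fun y => (v i y)⁻¹) (ball xB R))
      ≤ ENNReal.ofReal C

/-- The kernel of the modified multilinear fractional operator `J_{γ,m}`. -/
def Jker {n : ℕ} (m : ℕ) (γ : ℝ) (x : Rn n) (y : Fin m → Rn n) : ℝ :=
  (∑ i, dist x (y i)) ^ (γ - (m : ℝ) * (n : ℝ)) -
    (if ∀ i, y i ∈ ball (0 : Rn n) 1 then 0
     else (∑ i, dist (0 : Rn n) (y i)) ^ (γ - (m : ℝ) * (n : ℝ)))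

/-- The modified multilinear fractional operator `J_{γ,m}`. -/
def Jop {n m : ℕ} (γ : ℝ) (f : Fin m → Rn n → ℝ) (x : Rn n) : ℝ :=
  ∫ y : Fin m → Rn n, Jker m γ x y * ∏ i, f i (y i)

/-- The vector `(1,…,1)` in `ℝⁿ`. -/
def uvec (n : ℕ) : Rn n := (EuclideanSpace.equiv (Fin n) ℝ).symm fun _ => 1

/-- The quadrant `A` associated to a ball with center `xB`. -/
def Aset {n : ℕ} (xB : Rn n) : Set (Rn n) := {y | ∀ i, xB i ≤ y i}

/-- The set `C₁` associated to a ball `B(xB,R)`. -/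
def C1set {n : ℕ} (xB : Rn n) (R : ℝ) : Set (Rn n) :=
  ball (xB - (R / (12 * Real.sqrt n)) • uvec n) (R / (12 * Real.sqrt n)) ∩
    {y | ∀ i, y i ≤ (xB - (R / (12 * Real.sqrt n)) • uvec n) i}

/-- The set `C₂` associated to a ball `B(xB,R)`. -/
def C2set {n : ℕ} (xB : Rn n) (R : ℝ) : Set (Rn n) :=
  ball (xB - (R / (3 * Real.sqrt n)) • uvec n) (2 * R / 3) ∩
    {y | ∀ i, y i ≤ (xB - (R / (3 * Real.sqrt n)) • uvec n) i}

/-!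
Write `a = |B|^{1/n}` and `α = n - γ/m + 1/m`. On `B` itself the kernel weight
`(a + |x_B - y|)^{-α}` is comparable to `a^{-α}`, so each factor of the `ℍ_m` condition dominates
`a^{-α}` times the local `L^{p_i'}` norm of `v_i⁻¹` on `B`; since `δ = γ - n/p`, the powers of `a`
cancel and `ℍ_m(p⃗,γ,δ) ⊆ A_{p⃗,∞}`.

Conversely, on the dyadic annulus `2^{k+1}B \ 2^kB` the weight is at most `(c 2^k a)^{-α}`, so the
`i`-th factor is bounded by `∑_k (c 2^k a)^{-α} ‖v_i⁻¹‖_{L^{p_i'}(2^kB)}`. Expanding the product of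
the `m` series over multi-indices `g` and applying the `A_{p⃗,∞}` condition on the single ball
`2^{g_1+⋯+g_m}B`, which contains every `2^{g_i}B`, leaves the geometric series
`∑_g 2^{(δ-τ)(g_1+⋯+g_m)}`, which converges exactly when `δ < τ`.
-/

namespace ENNReal

lemma rpow_neg_le_rpow_neg {x y : ℝ≥0∞} (h : x ≤ y) {a : ℝ} (ha : 0 ≤ a) :
    y ^ (-a) ≤ x ^ (-a) := by
  rw [rpow_neg, rpow_neg]
  exact ENNReal.inv_le_inv.mpr (rpow_le_rpow h ha)

lemma rpow_neg_ne_top {x : ℝ≥0∞} (hx : x ≠ 0) {a : ℝ} (ha : 0 ≤ a) : x ^ (-a) ≠ ∞ := by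
  simp [rpow_neg, ha, hx]

lemma prod_rpow_eq_rpow_sum {ι : Type*} (s : Finset ι) (f : ι → ℝ) {x : ℝ≥0∞} (hx : x ≠ 0)
    (hx' : x ≠ ∞) : ∏ i ∈ s, x ^ f i = x ^ (∑ i ∈ s, f i) := by
  classical
  induction s using Finset.induction with
  | empty => simp
  | insert _ _ h ih => rw [Finset.prod_insert h, Finset.sum_insert h, ih, ← rpow_add _ _ hx hx']

lemma rpow_tsum_le_tsum_rpow {ι : Type*} (a : ι → ℝ≥0∞) {r : ℝ} (hr0 : 0 < r) (hr1 : r ≤ 1) :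
    (∑' k, a k) ^ r ≤ ∑' k, a k ^ r := by
  classical
  have hsum : ∀ s : Finset ι, (∑ k ∈ s, a k) ^ r ≤ ∑ k ∈ s, a k ^ r := by
    intro s
    induction s using Finset.induction with
    | empty => simp [zero_rpow_of_pos hr0]
    | insert _ _ h ih =>
      rw [Finset.sum_insert h, Finset.sum_insert h]
      exact (rpow_add_le_add_rpow _ _ hr0.le hr1).trans (add_le_add_right ih _)
  rw [← rpow_le_rpow_iff (inv_pos.mpr hr0), rpow_rpow_inv hr0.ne', ENNReal.tsum_eq_iSup_sum]
  refine iSup_le fun s => ?_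
  calc ∑ k ∈ s, a k = ((∑ k ∈ s, a k) ^ r) ^ r⁻¹ := (rpow_rpow_inv hr0.ne' _).symm
    _ ≤ (∑' k, a k ^ r) ^ r⁻¹ :=
      rpow_le_rpow ((hsum s).trans (ENNReal.sum_le_tsum _)) (inv_pos.mpr hr0).le

lemma prod_tsum_eq_tsum_prod {β : Type*} :
    ∀ {m : ℕ} (f : Fin m → β → ℝ≥0∞), ∏ i, ∑' k, f i k = ∑' g : Fin m → β, ∏ i, f i (g i)
  | 0, f => by simp
  | m + 1, f => by
    rw [Fin.prod_univ_succ, prod_tsum_eq_tsum_prod, ← (Fin.consEquiv fun _ => β).tsum_eq,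
      ENNReal.tsum_prod', ← ENNReal.tsum_mul_right]
    refine tsum_congr fun k => ?_
    rw [← ENNReal.tsum_mul_left]
    simp [Fin.consEquiv, Fin.prod_univ_succ]

lemma tsum_pow_sum_eq (m : ℕ) (r : ℝ≥0∞) :
    ∑' g : Fin m → ℕ, r ^ ∑ i, g i = ((1 - r)⁻¹) ^ m := by
  simp_rw [← Finset.prod_pow_eq_pow_sum, ← prod_tsum_eq_tsum_prod fun _ k => r ^ k,
    ENNReal.tsum_geometric, Finset.prod_const, Finset.card_univ, Fintype.card_fin]

lemma exists_pos_ofReal_bound {α β : Type*} {P : β → Prop} {F : α → β → ℝ≥0∞} {c : ℝ≥0∞}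
    (hc : c ≠ ∞) (h : ∀ a b, P b → F a b ≤ c) :
    ∃ C : ℝ, 0 < C ∧ ∀ a b, P b → F a b ≤ ENNReal.ofReal C :=
  ⟨c.toReal + 1, by positivity, fun a b hb => (h a b hb).trans <| by
    rw [← ENNReal.ofReal_toReal hc]
    exact ENNReal.ofReal_le_ofReal (by simp)⟩

lemma exists_two_mul_le_of_ne_zero {x : ℝ≥0∞} (hx : x ≠ 0) :
    ∃ c₀ : ℝ≥0∞, c₀ ≠ 0 ∧ c₀ ≤ 1 ∧ 2 * c₀ ≤ x :=
  ⟨min 1 (2⁻¹ * x), by simp [hx], min_le_left _ _, by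
    calc 2 * min 1 (2⁻¹ * x) ≤ 2 * (2⁻¹ * x) := mul_le_mul_right (min_le_right _ _) _
      _ = x := by rw [← mul_assoc, ENNReal.mul_inv_cancel two_ne_zero (by simp), one_mul]⟩

end ENNReal

section LpOn

variable {n : ℕ} {q : ℝ≥0∞}

lemma lpOn_mono_set (g : Rn n → ℝ≥0∞) {s t : Set (Rn n)} (hst : s ⊆ t) :
    lpOn q g s ≤ lpOn q g t := by
  unfold lpOn
  split
  · exact essSup_mono_measure
      (Measure.absolutelyContinuous_of_le (Measure.restrict_mono hst le_rfl))
  · gcongr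

lemma lpOn_mono_fun {g h : Rn n → ℝ≥0∞} {s : Set (Rn n)} (hs : MeasurableSet s)
    (hgh : ∀ y ∈ s, g y ≤ h y) : lpOn q g s ≤ lpOn q h s := by
  have hae : ∀ᵐ y ∂(volume.restrict s), g y ≤ h y := (ae_restrict_iff' hs).mpr (.of_forall hgh)
  unfold lpOn
  split
  · exact essSup_mono_ae hae
  · gcongr ?_ ^ _
    exact lintegral_mono_ae (hae.mono fun y hy => by gcongr)

lemma lpOn_const_mul (hq : 1 ≤ q) {c : ℝ≥0∞} (hc : c ≠ ∞) (g : Rn n → ℝ≥0∞) (s : Set (Rn n)) :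
    lpOn q (fun y => c * g y) s = c * lpOn q g s := by
  unfold lpOn
  split_ifs with htop
  · exact ENNReal.essSup_const_mul
  · have ht : 0 < q.toReal := ENNReal.toReal_pos (by positivity) htop
    simp_rw [ENNReal.mul_rpow_of_nonneg _ _ ht.le]
    rw [lintegral_const_mul' _ _ (ENNReal.rpow_ne_top_of_nonneg ht.le hc),
      ENNReal.mul_rpow_of_nonneg _ _ (by positivity), ← ENNReal.rpow_mul,
      mul_one_div_cancel ht.ne', ENNReal.rpow_one]

lemma lpOn_univ_le_tsum (hq : 1 ≤ q) (g : Rn n → ℝ≥0∞) {E : ℕ → Set (Rn n)}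
    (hE : ∀ k, MeasurableSet (E k)) (hcover : ⋃ k, E k = univ) :
    lpOn q g univ ≤ ∑' k, lpOn q g (E k) := by
  unfold lpOn
  split_ifs with htop
  · have hbound : ∀ᵐ y ∂volume, ∀ k, y ∈ E k → g y ≤ essSup g (volume.restrict (E k)) :=
      ae_all_iff.mpr fun k => (ae_restrict_iff' (hE k)).mp (ENNReal.ae_le_essSup g)
    rw [Measure.restrict_univ]
    refine essSup_le_of_ae_le _ (hbound.mono fun y hy => ?_)
    obtain ⟨k, hk⟩ := mem_iUnion.mp (hcover.symm ▸ mem_univ y : y ∈ ⋃ k, E k)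
    exact (hy k hk).trans (ENNReal.le_tsum k)
  · have ht : 1 ≤ q.toReal := by
      simpa using ENNReal.toReal_mono htop hq
    calc (∫⁻ y in univ, g y ^ q.toReal) ^ (1 / q.toReal)
        ≤ (∑' k, ∫⁻ y in E k, g y ^ q.toReal) ^ (1 / q.toReal) := by
          rw [← hcover]
          gcongr
          exact lintegral_iUnion_le _ _
      _ ≤ ∑' k, (∫⁻ y in E k, g y ^ q.toReal) ^ (1 / q.toReal) :=
          ENNReal.rpow_tsum_le_tsum_rpow _ (by positivity) ((div_le_one (by positivity)).mpr ht)

end LpOn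

section DyadicBall

variable {X : Type*} [PseudoMetricSpace X]

lemma iUnion_ball_two_pow_mul (x : X) {R : ℝ} (hR : 0 < R) : ⋃ k : ℕ, ball x (2 ^ k * R) = univ :=
  eq_univ_of_forall fun y => mem_iUnion.mpr <| by
    obtain ⟨k, hk⟩ := pow_unbounded_of_one_lt (dist y x / R) one_lt_two
    exact ⟨k, mem_ball.mpr ((div_lt_iff₀ hR).mp hk)⟩

lemma monotone_ball_two_pow_mul (x : X) {R : ℝ} (hR : 0 < R) :
    Monotone fun k : ℕ => ball x (2 ^ k * R) := fun _ _ hkl =>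
  ball_subset_ball (mul_le_mul_of_nonneg_right (pow_le_pow_right₀ one_le_two hkl) hR.le)

lemma mul_two_pow_le_add_edist {x y : X} {R : ℝ} (hR : 0 < R) {a c : ℝ≥0∞} (hca : c ≤ a)
    (hcR : 2 * c ≤ ENNReal.ofReal R) {k : ℕ}
    (hy : y ∈ disjointed (fun k : ℕ => ball x (2 ^ k * R)) k) :
    c * 2 ^ k ≤ a + edist x y := by
  cases k with
  | zero => simpa using hca.trans le_self_add
  | succ k =>
    rw [(monotone_ball_two_pow_mul x hR).disjointed_add_one] at hy
    have hfar : ENNReal.ofReal (2 ^ k * R) ≤ edist x y := by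
      rw [edist_comm, edist_dist]
      exact ENNReal.ofReal_le_ofReal (not_lt.mp hy.2)
    rw [ENNReal.ofReal_mul (by positivity), ENNReal.ofReal_pow zero_le_two, ENNReal.ofReal_ofNat]
      at hfar
    calc c * 2 ^ (k + 1) = 2 ^ k * (2 * c) := by ring
      _ ≤ 2 ^ k * ENNReal.ofReal R := by gcongr
      _ ≤ a + edist x y := hfar.trans le_add_self

end DyadicBall

section TailWeight

variable {n : ℕ} {q : ℝ≥0∞}

lemma rpow_neg_mul_lpOn_ball_le (hq : 1 ≤ q) (u : Rn n → ℝ≥0∞) (x : Rn n) {R : ℝ} (hR : 0 < R)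
    (a : ℝ≥0∞) {α : ℝ} (hα : 0 ≤ α) :
    (a + ENNReal.ofReal R) ^ (-α) * lpOn q u (ball x R) ≤
      lpOn q (fun y => u y * (a + edist x y) ^ (-α)) univ := by
  have hne : (a + ENNReal.ofReal R) ^ (-α) ≠ ∞ :=
    ENNReal.rpow_neg_ne_top (by simp [hR]) hα
  rw [← lpOn_const_mul hq hne]
  refine (lpOn_mono_fun measurableSet_ball fun y hy => ?_).trans (lpOn_mono_set _ (subset_univ _))
  rw [mul_comm]
  refine mul_le_mul_right (ENNReal.rpow_neg_le_rpow_neg (add_le_add_right ?_ _) hα) _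
  rw [edist_comm, edist_dist]
  exact ENNReal.ofReal_le_ofReal (mem_ball.mp hy).le

lemma lpOn_le_tsum_dyadic (hq : 1 ≤ q) (u : Rn n → ℝ≥0∞) (x : Rn n) {R : ℝ} (hR : 0 < R)
    {a c : ℝ≥0∞} (hc : c ≠ 0) (hca : c ≤ a) (hcR : 2 * c ≤ ENNReal.ofReal R) {α : ℝ}
    (hα : 0 ≤ α) :
    lpOn q (fun y => u y * (a + edist x y) ^ (-α)) univ ≤
      c ^ (-α) * ∑' k : ℕ, ((2 : ℝ≥0∞) ^ (-α)) ^ k * lpOn q u (ball x (2 ^ k * R)) := by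
  set E := disjointed fun k : ℕ => ball x (2 ^ k * R)
  have hcoef : ∀ k : ℕ, (c * 2 ^ k) ^ (-α) = c ^ (-α) * ((2 : ℝ≥0∞) ^ (-α)) ^ k := by
    intro k
    rw [ENNReal.mul_rpow_of_ne_zero hc (by simp), ← ENNReal.rpow_natCast, ← ENNReal.rpow_mul,
      mul_comm (k : ℝ), ENNReal.rpow_mul, ENNReal.rpow_natCast]
  rw [← ENNReal.tsum_mul_left]
  refine (lpOn_univ_le_tsum hq _ (MeasurableSet.disjointed fun _ => measurableSet_ball)
    (iUnion_disjointed.trans (iUnion_ball_two_pow_mul x hR))).trans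
    (ENNReal.tsum_le_tsum fun k => ?_)
  have hck : (c * 2 ^ k) ^ (-α) ≠ ∞ := ENNReal.rpow_neg_ne_top (by simp [hc]) hα
  calc lpOn q (fun y => u y * (a + edist x y) ^ (-α)) (E k)
      ≤ lpOn q (fun y => (c * 2 ^ k) ^ (-α) * u y) (E k) :=
        lpOn_mono_fun (MeasurableSet.disjointed (fun _ => measurableSet_ball) k) fun y hy => by
          rw [mul_comm ((c * 2 ^ k) ^ (-α))]
          exact mul_le_mul_right
            (ENNReal.rpow_neg_le_rpow_neg (mul_two_pow_le_add_edist hR hca hcR hy) hα) _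
    _ ≤ (c * 2 ^ k) ^ (-α) * lpOn q u (ball x (2 ^ k * R)) := by
        rw [lpOn_const_mul hq hck]
        gcongr
        exact lpOn_mono_set _ (disjointed_subset _ k)
    _ = _ := by rw [hcoef, mul_assoc]

end TailWeight

lemma one_le_conjE {q : ℝ≥0∞} (hq : 1 ≤ q) : 1 ≤ conjE q := by
  unfold conjE
  split_ifs with h1 htop
  · exact le_top
  · exact le_rfl
  · have hq1 : 1 < q.toReal := by
      simpa using ENNReal.toReal_strict_mono htop (lt_of_le_of_ne hq (Ne.symm h1))
    rw [← ENNReal.ofReal_one]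
    exact ENNReal.ofReal_le_ofReal ((one_le_div (by linarith)).mpr (by linarith))

lemma toReal_inv_conjE {q : ℝ≥0∞} (hq : 1 ≤ q) :
    ((conjE q)⁻¹).toReal = 1 - (q⁻¹).toReal := by
  unfold conjE
  split_ifs with h1 htop
  · simp [h1]
  · simp [htop]
  · have hq1 : 1 < q.toReal := by
      simpa using ENNReal.toReal_strict_mono htop (lt_of_le_of_ne hq (Ne.symm h1))
    rw [ENNReal.toReal_inv, ENNReal.toReal_inv, ENNReal.toReal_ofReal (by positivity)]
    field_simp

section VolumeBall

variable {n : ℕ}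

lemma volume_ball_eq (x : Rn n) {R : ℝ} (hR : 0 < R) :
    volume (ball x R) = ENNReal.ofReal R ^ n * volume (ball (0 : Rn n) 1) := by
  rw [Measure.addHaar_ball_of_pos _ x hR, finrank_euclideanSpace_fin, ENNReal.ofReal_pow hR.le]

lemma volume_ball_two_pow_mul (x : Rn n) {R : ℝ} (hR : 0 < R) (k : ℕ) :
    volume (ball x (2 ^ k * R)) = ((2 : ℝ≥0∞) ^ n) ^ k * volume (ball x R) := by
  rw [volume_ball_eq x (by positivity), volume_ball_eq x hR, ENNReal.ofReal_mul (by positivity),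
    ENNReal.ofReal_pow zero_le_two, ENNReal.ofReal_ofNat, mul_pow, ← pow_mul, ← pow_mul, mul_comm k,
    mul_assoc]

lemma ofReal_eq_volume_ball_rpow (hn : n ≠ 0) (x : Rn n) {R : ℝ} (hR : 0 < R) :
    ENNReal.ofReal R =
      volume (ball (0 : Rn n) 1) ^ (-(n : ℝ)⁻¹) * volume (ball x R) ^ (n : ℝ)⁻¹ := by
  have hκ0 : volume (ball (0 : Rn n) 1) ≠ 0 := (measure_ball_pos _ _ one_pos).ne'
  have hκt : volume (ball (0 : Rn n) 1) ≠ ∞ := measure_ball_lt_top.ne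
  rw [volume_ball_eq x hR, ENNReal.mul_rpow_of_nonneg _ _ (by positivity), ← ENNReal.rpow_natCast,
    ENNReal.rpow_rpow_inv (by exact_mod_cast hn), mul_left_comm, ← ENNReal.rpow_add _ _ hκ0 hκt,
    neg_add_cancel, ENNReal.rpow_zero, mul_one]

end VolumeBall

section Exponents

variable {m : ℕ} {p : Fin m → ℝ≥0∞}

lemma sum_toReal_inv_conjE (hp : ∀ i, 1 ≤ p i) :
    ∑ i, ((conjE (p i))⁻¹).toReal = m - ∑ i, ((p i)⁻¹).toReal := by
  simp [toReal_inv_conjE (hp _), Finset.sum_sub_distrib]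

variable {n : ℕ} {γ δ : ℝ}

lemma exponent_balance (hm : m ≠ 0) (hp : ∀ i, 1 ≤ p i)
    (hδ : δ = γ - n * ∑ i, ((p i)⁻¹).toReal) :
    (n : ℝ) * ∑ i, ((conjE (p i))⁻¹).toReal - ((n : ℝ) - γ / m + 1 / m) * m = δ - 1 := by
  rw [sum_toReal_inv_conjE hp, hδ]
  field_simp
  ring

lemma decay_exponent_eq (hm : m ≠ 0) (hp : ∀ i, 1 ≤ p i) {τ : ℝ}
    (hτ : τ = (γ - m * n) * (1 - 1 / (m : ℝ)) + 1 / (m : ℝ))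
    (hδ : δ = γ - n * ∑ i, ((p i)⁻¹).toReal) :
    (n : ℝ) * ∑ i, ((conjE (p i))⁻¹).toReal - ((n : ℝ) - γ / m + 1 / m) = δ - τ := by
  rw [sum_toReal_inv_conjE hp, hδ, hτ]
  field_simp
  ring

end Exponents

lemma HmFactor_eq_lpOn {n m : ℕ} {γi α : ℝ} (hα : α = n - γi + 1 / m) (q : ℝ≥0∞)
    (u : Rn n → ℝ≥0∞) (xB : Rn n) (R : ℝ) :
    HmFactor m γi q u xB R = lpOn q
      (fun y => (u y)⁻¹ * (volume (ball xB R) ^ (n : ℝ)⁻¹ + edist xB y) ^ (-α)) univ := by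
  subst hα
  rfl

section BallComparison

variable {n m : ℕ} (p : Fin m → ℝ≥0∞) (v : Fin m → Rn n → ℝ≥0∞)

-- The expressions bounded over all balls in `ApInfty` and in `Hm` (there with `w = ∏ v_i` and
-- `γ_i = γ/m`).
def apInftyBall (xB : Rn n) (R : ℝ) : ℝ≥0∞ :=
  essSup (fun x => ∏ i, v i x) (volume.restrict (ball xB R)) *
    ∏ i, (volume (ball xB R) ^ (-(((conjE (p i))⁻¹).toReal)) *
      lpOn (conjE (p i)) (fun y => (v i y)⁻¹) (ball xB R))

def hmBall (γ δ : ℝ) (xB : Rn n) (R : ℝ) : ℝ≥0∞ :=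
  essSup (fun x => ∏ i, v i x) (volume.restrict (ball xB R)) *
    volume (ball xB R) ^ (-((δ - 1) / (n : ℝ))) *
    ∏ i, HmFactor m (γ / m) (conjE (p i)) (v i) xB R

variable {p} {γ δ α : ℝ}

lemma apInftyBall_le_hmBall (hn : n ≠ 0) (hp : ∀ i, 1 ≤ p i) (hα : α = n - γ / m + 1 / m)
    (hα0 : 0 ≤ α) (hbal : (n : ℝ) * ∑ i, ((conjE (p i))⁻¹).toReal - α * m = δ - 1)
    (xB : Rn n) {R : ℝ} (hR : 0 < R) :
    apInftyBall p v xB R ≤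
      (1 + volume (ball (0 : Rn n) 1) ^ (-(n : ℝ)⁻¹)) ^ (α * m) * hmBall p v γ δ xB R := by
  set V := volume (ball xB R)
  set a := V ^ (n : ℝ)⁻¹
  set μ := 1 + volume (ball (0 : Rn n) 1) ^ (-(n : ℝ)⁻¹)
  set s := ∑ i, ((conjE (p i))⁻¹).toReal
  set H := fun i => HmFactor m (γ / m) (conjE (p i)) (v i) xB R
  have hV0 : V ≠ 0 := (measure_ball_pos _ _ hR).ne'
  have hVt : V ≠ ∞ := measure_ball_lt_top.ne
  have ha0 : a ≠ 0 := by simp [a, hV0, hVt]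
  have hat : a ≠ ∞ := by simp [a, hV0, hVt]
  have hμt : μ ≠ ∞ := by simp [μ, ENNReal.rpow_eq_top_iff, (measure_ball_pos _ _ one_pos).ne']
  have hrpow : ∀ t : ℝ, V ^ t = a ^ ((n : ℝ) * t) := fun t => by
    rw [← ENNReal.rpow_mul, inv_mul_cancel_left₀ (by exact_mod_cast hn)]
  have hlocal : ∀ i, lpOn (conjE (p i)) (fun y => (v i y)⁻¹) (ball xB R) ≤ (μ * a) ^ α * H i := by
    intro i
    have h := rpow_neg_mul_lpOn_ball_le (one_le_conjE (hp i)) (fun y => (v i y)⁻¹) xB hR a hα0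
    rw [ofReal_eq_volume_ball_rpow hn xB hR, ← one_mul a, ← add_mul, one_mul,
      ENNReal.rpow_neg, ENNReal.inv_mul_le_iff] at h
    · simpa only [H, HmFactor_eq_lpOn hα] using h
    · simp [hα0, ha0]
    · exact ENNReal.rpow_ne_top_of_nonneg hα0 (ENNReal.mul_ne_top hμt hat)
  have hscale : V ^ (-s) * a ^ (α * m) = V ^ (-((δ - 1) / n)) := by
    rw [hrpow, hrpow, ← ENNReal.rpow_add _ _ ha0 hat]
    congr 1
    field_simp
    linarith
  calc apInftyBall p v xB R
      ≤ essSup (fun x => ∏ i, v i x) (volume.restrict (ball xB R)) *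
          ∏ i, (V ^ (-(((conjE (p i))⁻¹).toReal)) * ((μ * a) ^ α * H i)) := by
        exact mul_le_mul_right (Finset.prod_le_prod' fun i _ => mul_le_mul_right (hlocal i) _) _
    _ = μ ^ (α * m) * hmBall p v γ δ xB R := by
        rw [Finset.prod_mul_distrib, Finset.prod_mul_distrib, Finset.prod_const,
          ENNReal.prod_rpow_eq_rpow_sum _ _ hV0 hVt, Finset.card_univ, Fintype.card_fin,
          ← ENNReal.rpow_natCast, ← ENNReal.rpow_mul,
          ENNReal.mul_rpow_of_nonneg _ _ (by positivity), hmBall, ← hscale, Finset.sum_neg_distrib]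
        ring

lemma prod_HmFactor_le_tsum (hn : n ≠ 0) (hp : ∀ i, 1 ≤ p i) (hα : α = n - γ / m + 1 / m)
    (hα0 : 0 ≤ α) {c₀ : ℝ≥0∞} (hc₀ : c₀ ≠ 0) (hc₀1 : c₀ ≤ 1)
    (hc₀κ : 2 * c₀ ≤ volume (ball (0 : Rn n) 1) ^ (-(n : ℝ)⁻¹)) (xB : Rn n) {R : ℝ} (hR : 0 < R) :
    ∏ i, HmFactor m (γ / m) (conjE (p i)) (v i) xB R ≤
      ((c₀ * volume (ball xB R) ^ (n : ℝ)⁻¹) ^ (-α)) ^ m *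
        ∑' g : Fin m → ℕ, ∏ i, ((2 : ℝ≥0∞) ^ (-α)) ^ g i *
          lpOn (conjE (p i)) (fun y => (v i y)⁻¹) (ball xB (2 ^ g i * R)) := by
  set a := volume (ball xB R) ^ (n : ℝ)⁻¹
  have ha0 : a ≠ 0 := by simp [a, (measure_ball_pos volume xB hR).ne', measure_ball_lt_top.ne]
  have hdyadic := fun i => lpOn_le_tsum_dyadic (one_le_conjE (hp i)) (fun y => (v i y)⁻¹) xB hR
    (c := c₀ * a) (a := a) (mul_ne_zero hc₀ ha0) (mul_le_of_le_one_left' hc₀1)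
    (by rw [ofReal_eq_volume_ball_rpow hn xB hR, ← mul_assoc]; gcongr) hα0
  rw [← ENNReal.prod_tsum_eq_tsum_prod fun i k => ((2 : ℝ≥0∞) ^ (-α)) ^ k *
      lpOn (conjE (p i)) (fun y => (v i y)⁻¹) (ball xB (2 ^ k * R)),
    show ((c₀ * a) ^ (-α)) ^ m = ∏ _i : Fin m, (c₀ * a) ^ (-α) by simp, ← Finset.prod_mul_distrib]
  exact Finset.prod_le_prod' fun i _ => by simpa only [HmFactor_eq_lpOn hα] using hdyadic i

lemma essSup_mul_prod_lpOn_le {C : ℝ≥0∞} (xB : Rn n) {R : ℝ} (hR : 0 < R)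
    (hAp : apInftyBall p v xB R ≤ C) :
    essSup (fun x => ∏ i, v i x) (volume.restrict (ball xB R)) *
        ∏ i, lpOn (conjE (p i)) (fun y => (v i y)⁻¹) (ball xB R) ≤
      C * volume (ball xB R) ^ ∑ i, ((conjE (p i))⁻¹).toReal := by
  set V := volume (ball xB R)
  have hV0 : V ≠ 0 := (measure_ball_pos _ _ hR).ne'
  have hVt : V ≠ ∞ := measure_ball_lt_top.ne
  set s := ∑ i, ((conjE (p i))⁻¹).toReal
  have hAp' : V ^ (-s) * (essSup (fun x => ∏ i, v i x) (volume.restrict (ball xB R)) *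
      ∏ i, lpOn (conjE (p i)) (fun y => (v i y)⁻¹) (ball xB R)) ≤ C := by
    rwa [apInftyBall, Finset.prod_mul_distrib, ENNReal.prod_rpow_eq_rpow_sum _ _ hV0 hVt,
      Finset.sum_neg_distrib, mul_left_comm] at hAp
  calc _ = V ^ s * (V ^ (-s) * (essSup (fun x => ∏ i, v i x) (volume.restrict (ball xB R)) *
        ∏ i, lpOn (conjE (p i)) (fun y => (v i y)⁻¹) (ball xB R))) := by
        rw [← mul_assoc, ← ENNReal.rpow_add _ _ hV0 hVt, add_neg_cancel, ENNReal.rpow_zero,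
          one_mul]
    _ ≤ C * V ^ s := by rw [mul_comm C]; exact mul_le_mul_right hAp' _

lemma essSup_mul_prod_dyadic_le {C : ℝ≥0∞} (hAp : ∀ x R, 0 < R → apInftyBall p v x R ≤ C)
    (xB : Rn n) {R : ℝ} (hR : 0 < R) (t : ℝ≥0∞) (g : Fin m → ℕ) :
    essSup (fun x => ∏ i, v i x) (volume.restrict (ball xB R)) *
        ∏ i, t ^ g i * lpOn (conjE (p i)) (fun y => (v i y)⁻¹) (ball xB (2 ^ g i * R)) ≤
      C * volume (ball xB R) ^ (∑ i, ((conjE (p i))⁻¹).toReal) *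
        (t * ((2 : ℝ≥0∞) ^ n) ^ ∑ i, ((conjE (p i))⁻¹).toReal) ^ ∑ i, g i := by
  set K := ∑ i, g i
  set s := ∑ i, ((conjE (p i))⁻¹).toReal
  have hmono := monotone_ball_two_pow_mul xB hR
  have hK : ∀ i, g i ≤ K := fun i => Finset.single_le_sum (fun j _ => Nat.zero_le (g j))
    (Finset.mem_univ i)
  have hvol : volume (ball xB (2 ^ K * R)) ^ s = (((2 : ℝ≥0∞) ^ n) ^ s) ^ K *
      volume (ball xB R) ^ s := by
    rw [volume_ball_two_pow_mul xB hR, ENNReal.mul_rpow_of_ne_top (by simp) measure_ball_lt_top.ne]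
    congr 1
    rw [← ENNReal.rpow_natCast _ K, ← ENNReal.rpow_mul, mul_comm, ENNReal.rpow_mul,
      ENNReal.rpow_natCast]
  calc _ = t ^ K * (essSup (fun x => ∏ i, v i x) (volume.restrict (ball xB R)) *
        ∏ i, lpOn (conjE (p i)) (fun y => (v i y)⁻¹) (ball xB (2 ^ g i * R))) := by
        rw [Finset.prod_mul_distrib, Finset.prod_pow_eq_pow_sum]
        ring
    _ ≤ t ^ K * (essSup (fun x => ∏ i, v i x) (volume.restrict (ball xB (2 ^ K * R))) *
        ∏ i, lpOn (conjE (p i)) (fun y => (v i y)⁻¹) (ball xB (2 ^ K * R))) := by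
        refine mul_le_mul_right (mul_le_mul' ?_ ?_) _
        · refine essSup_mono_measure (Measure.absolutelyContinuous_of_le
            (Measure.restrict_mono (by simpa using hmono (Nat.zero_le K)) le_rfl))
        · exact Finset.prod_le_prod' fun i _ => lpOn_mono_set _ (hmono (hK i))
    _ ≤ t ^ K * (C * volume (ball xB (2 ^ K * R)) ^ s) :=
        mul_le_mul_right (essSup_mul_prod_lpOn_le v xB (by positivity) (hAp _ _ (by positivity))) _
    _ = _ := by rw [hvol, mul_pow]; ring

lemma hmBall_le_of_apInftyBall_le (hn : n ≠ 0) (hp : ∀ i, 1 ≤ p i) (hα : α = n - γ / m + 1 / m)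
    (hα0 : 0 ≤ α) (hbal : (n : ℝ) * ∑ i, ((conjE (p i))⁻¹).toReal - α * m = δ - 1)
    {c₀ : ℝ≥0∞} (hc₀ : c₀ ≠ 0) (hc₀1 : c₀ ≤ 1)
    (hc₀κ : 2 * c₀ ≤ volume (ball (0 : Rn n) 1) ^ (-(n : ℝ)⁻¹))
    {C : ℝ≥0∞} (hAp : ∀ x R, 0 < R → apInftyBall p v x R ≤ C) (xB : Rn n) {R : ℝ} (hR : 0 < R) :
    hmBall p v γ δ xB R ≤
      c₀ ^ (-(α * m)) * C * ((1 - 2 ^ ((n : ℝ) * ∑ i, ((conjE (p i))⁻¹).toReal - α))⁻¹) ^ m := by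
  set V := volume (ball xB R)
  set a := V ^ (n : ℝ)⁻¹
  set s := ∑ i, ((conjE (p i))⁻¹).toReal
  set W := essSup (fun x => ∏ i, v i x) (volume.restrict (ball xB R))
  set r : ℝ≥0∞ := 2 ^ ((n : ℝ) * s - α)
  have hV0 : V ≠ 0 := (measure_ball_pos _ _ hR).ne'
  have hVt : V ≠ ∞ := measure_ball_lt_top.ne
  have ha0 : a ≠ 0 := by simp [a, hV0, hVt]
  have hat : a ≠ ∞ := by simp [a, hV0, hVt]
  have hrpow : ∀ t : ℝ, V ^ t = a ^ ((n : ℝ) * t) := fun t => by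
    rw [← ENNReal.rpow_mul, inv_mul_cancel_left₀ (by exact_mod_cast hn)]
  have hr : (2 : ℝ≥0∞) ^ (-α) * ((2 : ℝ≥0∞) ^ n) ^ s = r := by
    rw [← ENNReal.rpow_natCast, ← ENNReal.rpow_mul, ← ENNReal.rpow_add _ _ two_ne_zero (by simp),
      neg_add_eq_sub]
  have hscale : V ^ (-((δ - 1) / n)) * ((c₀ * a) ^ (-α)) ^ m * V ^ s = c₀ ^ (-(α * m)) := by
    rw [← ENNReal.rpow_natCast, ← ENNReal.rpow_mul, ENNReal.mul_rpow_of_ne_zero hc₀ ha0, hrpow,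
      hrpow, mul_comm (c₀ ^ _), ← mul_assoc, ← ENNReal.rpow_add _ _ ha0 hat, mul_right_comm,
      ← ENNReal.rpow_add _ _ ha0 hat, neg_mul]
    convert one_mul _
    convert ENNReal.rpow_zero
    field_simp
    linarith
  calc hmBall p v γ δ xB R
      = V ^ (-((δ - 1) / n)) * (W * ∏ i, HmFactor m (γ / m) (conjE (p i)) (v i) xB R) := by
        rw [hmBall]; ring
    _ ≤ V ^ (-((δ - 1) / n)) * (W * (((c₀ * a) ^ (-α)) ^ m *
          ∑' g : Fin m → ℕ, ∏ i, ((2 : ℝ≥0∞) ^ (-α)) ^ g i *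
            lpOn (conjE (p i)) (fun y => (v i y)⁻¹) (ball xB (2 ^ g i * R)))) := by
        gcongr
        exact prod_HmFactor_le_tsum v hn hp hα hα0 hc₀ hc₀1 hc₀κ xB hR
    _ = V ^ (-((δ - 1) / n)) * ((c₀ * a) ^ (-α)) ^ m *
          ∑' g : Fin m → ℕ, W * ∏ i, ((2 : ℝ≥0∞) ^ (-α)) ^ g i *
            lpOn (conjE (p i)) (fun y => (v i y)⁻¹) (ball xB (2 ^ g i * R)) := by
        rw [ENNReal.tsum_mul_left]; ring
    _ ≤ V ^ (-((δ - 1) / n)) * ((c₀ * a) ^ (-α)) ^ m *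
          ∑' g : Fin m → ℕ, C * V ^ s * r ^ ∑ i, g i := by
        refine mul_le_mul_right (ENNReal.tsum_le_tsum fun g => ?_) _
        rw [← hr]
        exact essSup_mul_prod_dyadic_le v hAp xB hR _ g
    _ = c₀ ^ (-(α * m)) * C * ((1 - r)⁻¹) ^ m := by
        rw [ENNReal.tsum_mul_left, ENNReal.tsum_pow_sum_eq, ← hscale]
        ring

end BallComparison

section WeightClasses

variable {n m : ℕ} {p : Fin m → ℝ≥0∞} {v : Fin m → Rn n → ℝ≥0∞} {γ δ : ℝ}

lemma kernel_exponent_nonneg (hm : m ≠ 0) (hγ : γ < m * n) : 0 ≤ (n : ℝ) - γ / m + 1 / m := by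
  have hm' : (0 : ℝ) < m := by positivity
  have : γ / m < n := (div_lt_iff₀ hm').mpr (by linarith)
  have : 0 ≤ 1 / (m : ℝ) := by positivity
  linarith

lemma apInfty_of_hm (hn : n ≠ 0) (hm : m ≠ 0) (hγ : γ < m * n) (hp : ∀ i, 1 ≤ p i)
    (hδ : δ = γ - n * ∑ i, ((p i)⁻¹).toReal)
    (h : Hm m (fun _ => γ / m) δ p (fun x => ∏ i, v i x) v) : ApInfty m p v := by
  obtain ⟨C, -, hC⟩ := h
  set α : ℝ := (n : ℝ) - γ / m + 1 / m with hα
  have hα0 : 0 ≤ α := kernel_exponent_nonneg hm hγ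
  have hμ : (1 + volume (ball (0 : Rn n) 1) ^ (-(n : ℝ)⁻¹)) ^ (α * m) ≠ ∞ :=
    ENNReal.rpow_ne_top_of_nonneg (by positivity)
      (by simp [ENNReal.rpow_eq_top_iff, (measure_ball_pos _ _ one_pos).ne'])
  exact ENNReal.exists_pos_ofReal_bound (F := apInftyBall p v)
    (ENNReal.mul_ne_top hμ ENNReal.ofReal_ne_top) fun xB R hR =>
      (apInftyBall_le_hmBall v hn hp hα hα0 (exponent_balance hm hp hδ) xB hR).trans
        (mul_le_mul_right (hC xB R hR) _)

lemma hm_of_apInfty (hn : n ≠ 0) (hm : m ≠ 0) (hγ : γ < m * n) (hp : ∀ i, 1 ≤ p i) {τ : ℝ}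
    (hτ : τ = (γ - m * n) * (1 - 1 / (m : ℝ)) + 1 / (m : ℝ))
    (hδ : δ = γ - n * ∑ i, ((p i)⁻¹).toReal) (hδτ : δ < τ) (h : ApInfty m p v) :
    Hm m (fun _ => γ / m) δ p (fun x => ∏ i, v i x) v := by
  obtain ⟨C, -, hC⟩ := h
  set α : ℝ := (n : ℝ) - γ / m + 1 / m with hα
  have hα0 : 0 ≤ α := kernel_exponent_nonneg hm hγ
  obtain ⟨c₀, hc₀, hc₀1, hc₀κ⟩ := ENNReal.exists_two_mul_le_of_ne_zero
    (x := volume (ball (0 : Rn n) 1) ^ (-(n : ℝ)⁻¹)) (by simp [measure_ball_lt_top.ne])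
  have hr : (2 : ℝ≥0∞) ^ ((n : ℝ) * ∑ i, ((conjE (p i))⁻¹).toReal - α) < 1 :=
    ENNReal.rpow_lt_one_of_one_lt_of_neg (by norm_num)
      (by rw [decay_exponent_eq hm hp hτ hδ]; linarith)
  have hbound : c₀ ^ (-(α * m)) * ENNReal.ofReal C *
      ((1 - (2 : ℝ≥0∞) ^ ((n : ℝ) * ∑ i, ((conjE (p i))⁻¹).toReal - α))⁻¹) ^ m ≠ ∞ :=
    ENNReal.mul_ne_top (ENNReal.mul_ne_top (ENNReal.rpow_neg_ne_top hc₀ (by positivity))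
      ENNReal.ofReal_ne_top)
      (ENNReal.pow_ne_top (ENNReal.inv_ne_top.mpr (tsub_pos_iff_lt.mpr hr).ne'))
  exact ENNReal.exists_pos_ofReal_bound (F := hmBall p v γ δ) hbound fun xB R hR =>
    hmBall_le_of_apInftyBall_le v hn hp hα hα0 (exponent_balance hm hp hδ) hc₀ hc₀1 hc₀κ hC xB hR

end WeightClasses

theorem statement18_general {n m : ℕ} (hn : 1 ≤ n) (hm : 1 ≤ m) (γ δ τ : ℝ)
    (hγ : γ < m * n) (p : Fin m → ℝ≥0∞) (hp : ∀ i, 1 ≤ p i)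
    (hτ : τ = (γ - m * n) * (1 - 1 / (m : ℝ)) + 1 / (m : ℝ))
    (hδ : δ = γ - n * ∑ i, ((p i)⁻¹).toReal)
    (v : Fin m → Rn n → ℝ≥0∞) :
    (Hm m (fun _ => γ / m) δ p (fun x => ∏ i, v i x) v → ApInfty m p v) ∧
      (δ < τ →
        (Hm m (fun _ => γ / m) δ p (fun x => ∏ i, v i x) v ↔ ApInfty m p v)) := by
  have hn0 : n ≠ 0 := Nat.one_le_iff_ne_zero.mp hn
  have hm0 : m ≠ 0 := Nat.one_le_iff_ne_zero.mp hm
  have hHA := apInfty_of_hm (v := v) hn0 hm0 hγ hp hδ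
  exact ⟨hHA, fun hδτ => ⟨hHA, hm_of_apInfty hn0 hm0 hγ hp hτ hδ hδτ⟩⟩

/-- with `δ = γ - n/p` and `w = ∏ v_i`, membership in
`ℍ_m(p⃗,γ,δ)` implies `v⃗ ∈ A_{p⃗,∞}`; and if moreover `δ < τ`, then
`ℍ_m(p⃗,γ,δ)` and `A_{p⃗,∞}` coincide. -/
theorem statement18 {n m : ℕ} (hn : 1 ≤ n) (hm : 1 ≤ m) (γ δ τ : ℝ) (hγ0 : 0 < γ)
    (hγ : γ < m * n) (p : Fin m → ℝ≥0∞) (hp : ∀ i, 1 ≤ p i)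
    (hτ : τ = (γ - m * n) * (1 - 1 / (m : ℝ)) + 1 / (m : ℝ))
    (hδ : δ = γ - n * ∑ i, ((p i)⁻¹).toReal)
    (v : Fin m → Rn n → ℝ≥0∞) (hv : ∀ i, IsWeight (v i)) :
    (Hm m (fun _ => γ / m) δ p (fun x => ∏ i, v i x) v → ApInfty m p v) ∧
      (δ < τ →
        (Hm m (fun _ => γ / m) δ p (fun x => ∏ i, v i x) v ↔ ApInfty m p v)) :=
  statement18_general hn hm γ δ τ hγ p hp hτ hδ v
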